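/- arXiv:2504.14343 — 2 statements merged into one kernel-verified Lean document; each statement's English description precedes it below -/
import Mathlib

section
/- Master estimate for the diffusion coefficient: for every M > 0 there exists a constant C > 0, depending only on ε, δ, A₁, A₂, L_K, L_Dup and M, such that whenever ‖V‖₂ ≤ M and ‖V'‖₂ ≤ M, for all t, t', x, x' ∈ ℝ and all v, v' ≥ 0: |σ(t,(x,v),law(X,V)) − σ(t',(x',v'),law(X',V'))| ≤ σ̃_max·√|v − v'| + √v·C·(|t−t'|^{1/2} + |x−x'| + ‖X−X'‖₂ + ‖V−V'‖₂). -/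
set_option maxHeartbeats 1000000


open MeasureTheory

/-- The regularised leverage ratio. -/
noncomputable def Fratio (ε δ : ℝ) (K : ℝ → ℝ) (ν : Measure (ℝ × ℝ)) (x : ℝ) : ℝ :=
  ((∫ p, K ((p.1 - x) / ε) ∂ν) + δ) / ((∫ p, p.2 * K ((p.1 - x) / ε) ∂ν) + δ)

/-- `σ̃(t,x,ν) = D(t,x)·√(F(x,ν))`. -/
noncomputable def sigmaT (ε δ : ℝ) (K : ℝ → ℝ) (D : ℝ → ℝ → ℝ)
    (t x : ℝ) (ν : Measure (ℝ × ℝ)) : ℝ :=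
  D t x * Real.sqrt (Fratio ε δ K ν x)

/-- `‖ξ‖₂ = (E[ξ²])^{1/2}`. -/
noncomputable def l2norm {Ω : Type*} [MeasurableSpace Ω] (μ : Measure Ω) (f : Ω → ℝ) : ℝ :=
  Real.sqrt (∫ ω, (f ω) ^ 2 ∂μ)

lemma sqrt_add_le' {a b : ℝ} (ha : 0 ≤ a) (hb : 0 ≤ b) :
    Real.sqrt (a + b) ≤ Real.sqrt a + Real.sqrt b := by
  have h2 := Real.sq_sqrt ha
  have h3 := Real.sq_sqrt hb
  have h1 : a + b ≤ (Real.sqrt a + Real.sqrt b) ^ 2 := by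
    nlinarith [Real.sqrt_nonneg a, Real.sqrt_nonneg b,
      mul_nonneg (Real.sqrt_nonneg a) (Real.sqrt_nonneg b)]
  calc Real.sqrt (a + b) ≤ Real.sqrt ((Real.sqrt a + Real.sqrt b) ^ 2) := Real.sqrt_le_sqrt h1
  _ = _ := Real.sqrt_sq (by positivity)

lemma abs_sqrt_sub_sqrt {a b : ℝ} (ha : 0 ≤ a) (hb : 0 ≤ b) :
    |Real.sqrt a - Real.sqrt b| ≤ Real.sqrt |a - b| := by
  wlog h : b ≤ a generalizing a b
  · rw [abs_sub_comm, abs_sub_comm a b]; exact this hb ha (le_of_not_ge h)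
  rw [abs_of_nonneg (sub_nonneg.2 h), abs_of_nonneg (sub_nonneg.2 (Real.sqrt_le_sqrt h))]
  have h1 := sqrt_add_le' hb (sub_nonneg.2 h)
  rw [add_sub_cancel] at h1
  linarith

lemma sqrt_lip {a b c : ℝ} (hc : 0 < c) (ha : c ≤ a) (hb : c ≤ b) :
    |Real.sqrt a - Real.sqrt b| ≤ |a - b| / Real.sqrt c := by
  rw [le_div_iff₀ (Real.sqrt_pos.2 hc)]
  have h2 := Real.sq_sqrt (hc.le.trans ha)
  have h3 := Real.sq_sqrt (hc.le.trans hb)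
  have h1 : |a - b| = |Real.sqrt a - Real.sqrt b| * (Real.sqrt a + Real.sqrt b) := by
    rw [← abs_of_nonneg (show (0:ℝ) ≤ Real.sqrt a + Real.sqrt b by positivity), ← abs_mul]
    congr 1
    linear_combination h3 - h2
  rw [h1]
  have h4 : Real.sqrt c ≤ Real.sqrt a + Real.sqrt b := by
    have := Real.sqrt_le_sqrt ha
    have := Real.sqrt_nonneg b
    linarith
  exact mul_le_mul_of_nonneg_left h4 (abs_nonneg _)

lemma cauchy_schwarz' {Ω : Type} [MeasurableSpace Ω] {μ : Measure Ω}
    {f g : Ω → ℝ} (hf : MemLp f 2 μ) (hg : MemLp g 2 μ) :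
    ∫ ω, |f ω| * |g ω| ∂μ ≤ l2norm μ f * l2norm μ g := by
  have hpq : (2:ℝ).HolderConjugate 2 := (Real.holderConjugate_iff_eq_conjExponent one_lt_two).2 (by norm_num)
  have h2 : ENNReal.ofReal (2:ℝ) = 2 := by norm_num
  have H := integral_mul_norm_le_Lp_mul_Lq (μ := μ) hpq (h2 ▸ hf) (h2 ▸ hg)
  have e1 : ∀ (h : Ω → ℝ), (∫ a, ‖h a‖ ^ (2:ℝ) ∂μ) ^ ((1:ℝ)/2) = l2norm μ h := by
    intro h
    have : ∀ a, ‖h a‖ ^ (2:ℝ) = (h a) ^ 2 := by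
      intro a
      rw [show (2:ℝ) = ((2:ℕ):ℝ) by norm_num, Real.rpow_natCast, Real.norm_eq_abs, sq_abs]
    simp only [this]
    rw [l2norm, Real.sqrt_eq_rpow]
  rw [e1 f, e1 g] at H
  simpa [Real.norm_eq_abs] using H

lemma l2norm_one {Ω : Type} [MeasurableSpace Ω] (μ : Measure Ω) [IsProbabilityMeasure μ] :
    l2norm μ (fun _ => (1:ℝ)) = 1 := by
  simp [l2norm]

lemma integral_abs_le_l2 {Ω : Type} [MeasurableSpace Ω] {μ : Measure Ω} [IsProbabilityMeasure μ]
    {f : Ω → ℝ} (hf : MemLp f 2 μ) : ∫ ω, |f ω| ∂μ ≤ l2norm μ f := by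
  have H := cauchy_schwarz' hf (memLp_const (1:ℝ))
  simpa [l2norm_one] using H

lemma Fratio_map {Ω : Type} [MeasurableSpace Ω] (μ : Measure Ω)
    {K : ℝ → ℝ} (hK : Continuous K) {X V : Ω → ℝ} (hX : Measurable X) (hV : Measurable V)
    (ε δ x : ℝ) :
    Fratio ε δ K (Measure.map (fun ω => (X ω, V ω)) μ) x =
      ((∫ ω, K ((X ω - x) / ε) ∂μ) + δ) / ((∫ ω, V ω * K ((X ω - x) / ε) ∂μ) + δ) := by
  have hc1 : Continuous fun p : ℝ × ℝ => K ((p.1 - x) / ε) :=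
    hK.comp ((continuous_fst.sub continuous_const).div_const ε)
  have hc2 : Continuous fun p : ℝ × ℝ => p.2 * K ((p.1 - x) / ε) := continuous_snd.mul hc1
  rw [Fratio, integral_map (hX.prodMk hV).aemeasurable hc1.aestronglyMeasurable,
    integral_map (hX.prodMk hV).aemeasurable hc2.aestronglyMeasurable]

/-- master estimate for the diffusion coefficient
`σ(t,(x,v),ν) = √v·σ̃(t,x,ν)`, with `σ̃_max = A₁·√((A₂+δ)/δ)` and a constant `C`
depending only on `ε, δ, A₁, A₂, L_K, L_Dup` and the moment bound `M`. -/
theorem stmt_11 (ε δ A₁ A₂ L_K L_Dup : ℝ) (hε : 0 < ε) (hδ : 0 < δ)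
    (hA₁ : 0 < A₁) (hA₂ : 0 < A₂) (hLK : 0 < L_K) (hLDup : 0 < L_Dup)
    (K : ℝ → ℝ) (hK_nonneg : ∀ u, 0 ≤ K u) (hK_bdd : ∀ u, K u ≤ A₂)
    (hK_lip : ∀ u u', |K u - K u'| ≤ L_K * |u - u'|)
    (D : ℝ → ℝ → ℝ) (hD_bdd : ∀ t x, |D t x| ≤ A₁)
    (hD_lip : ∀ t₁ x₁ t₂ x₂,
      |D t₁ x₁ - D t₂ x₂| ≤ L_Dup * (|t₁ - t₂| ^ ((1 : ℝ) / 2) + |x₁ - x₂|)) :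
    ∀ M : ℝ, 0 < M → ∃ C : ℝ, 0 < C ∧
      ∀ (Ω : Type) (_ : MeasurableSpace Ω) (μ : Measure Ω), IsProbabilityMeasure μ →
        ∀ (X V X' V' : Ω → ℝ),
          Measurable X → Measurable V → Measurable X' → Measurable V' →
          (∀ ω, 0 ≤ V ω) → (∀ ω, 0 ≤ V' ω) →
          MemLp X 2 μ → MemLp V 2 μ → MemLp X' 2 μ → MemLp V' 2 μ →
          l2norm μ V ≤ M → l2norm μ V' ≤ M →
          ∀ (t t' x x' v v' : ℝ), 0 ≤ v → 0 ≤ v' →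
            |Real.sqrt v * sigmaT ε δ K D t x (Measure.map (fun ω => (X ω, V ω)) μ) -
              Real.sqrt v' * sigmaT ε δ K D t' x' (Measure.map (fun ω => (X' ω, V' ω)) μ)| ≤
              (A₁ * Real.sqrt ((A₂ + δ) / δ)) * Real.sqrt |v - v'| +
                Real.sqrt v * (C * (|t - t'| ^ ((1 : ℝ) / 2) + |x - x'| +
                  l2norm μ (fun ω => X ω - X' ω) + l2norm μ (fun ω => V ω - V' ω))) := by
  intro M hM
  set S := Real.sqrt ((A₂ + δ) / δ) with hSdef
  have hS : 0 < S := Real.sqrt_pos.2 (by positivity)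
  set R := Real.sqrt ((A₂ * M + δ) / δ) with hRdef
  have hR : 0 < R := Real.sqrt_pos.2 (by positivity)
  set Ec := L_K / ε with hEdef
  have hEc : 0 < Ec := by positivity
  set c2 := (A₁ * R) * (Ec / δ + (A₂ + δ) * (Ec * M) / δ ^ 2) with hc2def
  set c4 := (A₁ * R) * ((A₂ + δ) * A₂ / δ ^ 2) with hc4def
  have hc2 : 0 < c2 := by positivity
  have hc4 : 0 < c4 := by positivity
  clear_value S R Ec c2 c4
  refine ⟨L_Dup * S + c2 + c4, by positivity, ?_⟩
  set C := L_Dup * S + c2 + c4 with hCdef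
  clear_value C
  intro Ω mΩ μ hμ X V X' V' hX hV hX' hV' hVp hV'p hXL hVL hX'L hV'L hVM hV'M
    t t' x x' v v' hv hv'
  haveI := hμ
  have hKlip : LipschitzWith (Real.toNNReal L_K) K :=
    LipschitzWith.of_dist_le_mul fun u u' => by
      rw [Real.dist_eq, Real.dist_eq, Real.coe_toNNReal _ hLK.le]; exact hK_lip u u'
  have hKc : Continuous K := hKlip.continuous
  set T1 := |t - t'| ^ ((1:ℝ)/2) with hT1def
  set T2 := |x - x'| with hT2def
  set T3 := l2norm μ (fun ω => X ω - X' ω) with hT3def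
  set T4 := l2norm μ (fun ω => V ω - V' ω) with hT4def
  have hT1n : 0 ≤ T1 := by rw [hT1def]; exact Real.rpow_nonneg (abs_nonneg _) _
  have hT2n : 0 ≤ T2 := by rw [hT2def]; exact abs_nonneg _
  have hT3n : 0 ≤ T3 := by rw [hT3def]; exact Real.sqrt_nonneg _
  have hT4n : 0 ≤ T4 := by rw [hT4def]; exact Real.sqrt_nonneg _
  have hDd : |D t x - D t' x'| ≤ L_Dup * (T1 + T2) := by
    rw [hT1def, hT2def]; exact hD_lip t x t' x'
  set f := fun ω => K ((X ω - x) / ε) with hfdef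
  set f' := fun ω => K ((X' ω - x') / ε) with hf'def
  set g := fun ω => V ω * f ω with hgdef
  set g' := fun ω => V' ω * f' ω with hg'def
  -- pointwise kernel Lipschitz estimate
  have hKd : ∀ ω, |f ω - f' ω| ≤ Ec * (T2 + |X ω - X' ω|) := by
    intro ω
    have h1 := hK_lip ((X ω - x) / ε) ((X' ω - x') / ε)
    have h2 : |(X ω - x) / ε - (X' ω - x') / ε| = |(X ω - X' ω) - (x - x')| / ε := by
      rw [show (X ω - x) / ε - (X' ω - x') / ε = ((X ω - X' ω) - (x - x')) / ε by ring,
        abs_div, abs_of_pos hε]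
    have h3 : |(X ω - X' ω) - (x - x')| ≤ |X ω - X' ω| + T2 := by
      rw [hT2def]; exact abs_sub _ _
    have h4 : |(X ω - x) / ε - (X' ω - x') / ε| ≤ (|X ω - X' ω| + T2) / ε := by
      rw [h2]; gcongr
    calc |f ω - f' ω| ≤ L_K * |(X ω - x) / ε - (X' ω - x') / ε| := h1
    _ ≤ L_K * ((|X ω - X' ω| + T2) / ε) := mul_le_mul_of_nonneg_left h4 hLK.le
    _ = Ec * (T2 + |X ω - X' ω|) := by rw [hEdef]; ring
  -- measurability and integrability
  have hfm : Measurable f := hKc.measurable.comp ((hX.sub_const x).div_const ε)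
  have hf'm : Measurable f' := hKc.measurable.comp ((hX'.sub_const x').div_const ε)
  have hfi : Integrable f μ := by
    refine Integrable.mono' (integrable_const A₂) hfm.aestronglyMeasurable ?_
    filter_upwards with ω
    rw [Real.norm_eq_abs, abs_of_nonneg (hK_nonneg _)]; exact hK_bdd _
  have hf'i : Integrable f' μ := by
    refine Integrable.mono' (integrable_const A₂) hf'm.aestronglyMeasurable ?_
    filter_upwards with ω
    rw [Real.norm_eq_abs, abs_of_nonneg (hK_nonneg _)]; exact hK_bdd _
  have hVi : Integrable V μ := hVL.integrable one_le_two
  have hV'i : Integrable V' μ := hV'L.integrable one_le_two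
  have hgi : Integrable g μ := by
    refine Integrable.mono' (hVi.const_mul A₂) (hV.mul hfm).aestronglyMeasurable ?_
    filter_upwards with ω
    rw [Real.norm_eq_abs, abs_of_nonneg (mul_nonneg (hVp ω) (hK_nonneg _))]
    calc V ω * f ω ≤ V ω * A₂ := mul_le_mul_of_nonneg_left (hK_bdd _) (hVp ω)
    _ = A₂ * V ω := mul_comm _ _
  have hg'i : Integrable g' μ := by
    refine Integrable.mono' (hV'i.const_mul A₂) (hV'.mul hf'm).aestronglyMeasurable ?_
    filter_upwards with ω
    rw [Real.norm_eq_abs, abs_of_nonneg (mul_nonneg (hV'p ω) (hK_nonneg _))]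
    calc V' ω * f' ω ≤ V' ω * A₂ := mul_le_mul_of_nonneg_left (hK_bdd _) (hV'p ω)
    _ = A₂ * V' ω := mul_comm _ _
  -- moment bounds
  have hVint : ∫ ω, V ω ∂μ ≤ M := by
    have h1 : ∫ ω, V ω ∂μ = ∫ ω, |V ω| ∂μ :=
      integral_congr_ae (by filter_upwards with ω using (abs_of_nonneg (hVp ω)).symm)
    rw [h1]; exact (integral_abs_le_l2 hVL).trans hVM
  have hV'int : ∫ ω, V' ω ∂μ ≤ M := by
    have h1 : ∫ ω, V' ω ∂μ = ∫ ω, |V' ω| ∂μ :=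
      integral_congr_ae (by filter_upwards with ω using (abs_of_nonneg (hV'p ω)).symm)
    rw [h1]; exact (integral_abs_le_l2 hV'L).trans hV'M
  -- L2 facts
  have hXX'L : MemLp (fun ω => X ω - X' ω) 2 μ := hXL.sub hX'L
  have hVV'L : MemLp (fun ω => V ω - V' ω) 2 μ := hVL.sub hV'L
  have hXX'i : Integrable (fun ω => |X ω - X' ω|) μ := (hXX'L.integrable one_le_two).abs
  have hVV'i : Integrable (fun ω => |V ω - V' ω|) μ := (hVV'L.integrable one_le_two).abs
  have hXX'int : ∫ ω, |X ω - X' ω| ∂μ ≤ T3 := by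
    rw [hT3def]; exact integral_abs_le_l2 hXX'L
  have hVV'int : ∫ ω, |V ω - V' ω| ∂μ ≤ T4 := by
    rw [hT4def]; exact integral_abs_le_l2 hVV'L
  have hVXi : Integrable (fun ω => V ω * |X ω - X' ω|) μ := by
    refine Integrable.mono'
      ((hVL.integrable_sq.add hXX'L.integrable_sq).div_const 2)
      (hV.mul (hX.sub hX').abs).aestronglyMeasurable ?_
    filter_upwards with ω
    rw [Real.norm_eq_abs, abs_of_nonneg (mul_nonneg (hVp ω) (abs_nonneg _))]
    show V ω * |X ω - X' ω| ≤ (V ω ^ 2 + (X ω - X' ω) ^ 2) / 2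
    nlinarith [sq_nonneg (V ω - |X ω - X' ω|), sq_abs (X ω - X' ω)]
  have hVXint : ∫ ω, V ω * |X ω - X' ω| ∂μ ≤ M * T3 := by
    rw [hT3def]
    have h1 : ∫ ω, V ω * |X ω - X' ω| ∂μ = ∫ ω, |V ω| * |X ω - X' ω| ∂μ :=
      integral_congr_ae (by filter_upwards with ω using by rw [abs_of_nonneg (hVp ω)])
    rw [h1]
    exact (cauchy_schwarz' hVL hXX'L).trans
      (mul_le_mul_of_nonneg_right hVM (Real.sqrt_nonneg _))
  clear_value T1 T2 T3 T4
  -- the four integrals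
  set N := ∫ ω, f ω ∂μ with hNdef
  set N' := ∫ ω, f' ω ∂μ with hN'def
  set Dn := ∫ ω, g ω ∂μ with hDndef
  set Dn' := ∫ ω, g' ω ∂μ with hDn'def
  have hN0 : 0 ≤ N := integral_nonneg fun ω => hK_nonneg _
  have hN'0 : 0 ≤ N' := integral_nonneg fun ω => hK_nonneg _
  have hNle : N ≤ A₂ := by
    calc N ≤ ∫ _ω, A₂ ∂μ := integral_mono hfi (integrable_const _) fun ω => hK_bdd _
    _ = A₂ := by simp
  have hN'le : N' ≤ A₂ := by
    calc N' ≤ ∫ _ω, A₂ ∂μ := integral_mono hf'i (integrable_const _) fun ω => hK_bdd _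
    _ = A₂ := by simp
  have hD0 : 0 ≤ Dn := integral_nonneg fun ω => mul_nonneg (hVp ω) (hK_nonneg _)
  have hD'0 : 0 ≤ Dn' := integral_nonneg fun ω => mul_nonneg (hV'p ω) (hK_nonneg _)
  have hDle : Dn ≤ A₂ * M := by
    calc Dn ≤ ∫ ω, A₂ * V ω ∂μ := by
          refine integral_mono hgi (hVi.const_mul A₂) fun ω => ?_
          calc V ω * f ω ≤ V ω * A₂ := mul_le_mul_of_nonneg_left (hK_bdd _) (hVp ω)
          _ = A₂ * V ω := mul_comm _ _
    _ = A₂ * ∫ ω, V ω ∂μ := integral_const_mul A₂ V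
    _ ≤ A₂ * M := mul_le_mul_of_nonneg_left hVint hA₂.le
  have hD'le : Dn' ≤ A₂ * M := by
    calc Dn' ≤ ∫ ω, A₂ * V' ω ∂μ := by
          refine integral_mono hg'i (hV'i.const_mul A₂) fun ω => ?_
          calc V' ω * f' ω ≤ V' ω * A₂ := mul_le_mul_of_nonneg_left (hK_bdd _) (hV'p ω)
          _ = A₂ * V' ω := mul_comm _ _
    _ = A₂ * ∫ ω, V' ω ∂μ := integral_const_mul A₂ V'
    _ ≤ A₂ * M := mul_le_mul_of_nonneg_left hV'int hA₂.le
  -- ΔN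
  have hdN : |N - N'| ≤ Ec * (T2 + T3) := by
    have h1 : N - N' = ∫ ω, (f ω - f' ω) ∂μ := (integral_sub hfi hf'i).symm
    rw [h1]
    have h2 : |∫ ω, (f ω - f' ω) ∂μ| ≤ ∫ ω, |f ω - f' ω| ∂μ := by
      simpa [Real.norm_eq_abs] using
        norm_integral_le_integral_norm (μ := μ) (fun ω => f ω - f' ω)
    refine h2.trans ?_
    have h3 : ∫ ω, |f ω - f' ω| ∂μ ≤ ∫ ω, Ec * (T2 + |X ω - X' ω|) ∂μ :=
      integral_mono (hfi.sub hf'i).abs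
        (((integrable_const T2).add hXX'i).const_mul Ec) hKd
    refine h3.trans ?_
    calc ∫ ω, Ec * (T2 + |X ω - X' ω|) ∂μ
        = Ec * (T2 + ∫ ω, |X ω - X' ω| ∂μ) := by
          rw [integral_const_mul, integral_add (integrable_const _) hXX'i, integral_const]
          simp
    _ ≤ Ec * (T2 + T3) := mul_le_mul_of_nonneg_left (by linarith) hEc.le
  -- ΔDn
  have hdD : |Dn - Dn'| ≤ Ec * M * (T2 + T3) + A₂ * T4 := by
    have h1 : Dn - Dn' = ∫ ω, (g ω - g' ω) ∂μ := (integral_sub hgi hg'i).symm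
    have hptw : ∀ ω, |g ω - g' ω| ≤
        Ec * T2 * V ω + Ec * (V ω * |X ω - X' ω|) + A₂ * |V ω - V' ω| := by
      intro ω
      have e : g ω - g' ω = V ω * (f ω - f' ω) + (V ω - V' ω) * f' ω := by
        simp only [hgdef, hg'def]; ring
      rw [e]
      calc |V ω * (f ω - f' ω) + (V ω - V' ω) * f' ω|
          ≤ |V ω * (f ω - f' ω)| + |(V ω - V' ω) * f' ω| := abs_add_le _ _
      _ = V ω * |f ω - f' ω| + |V ω - V' ω| * f' ω := by
          rw [abs_mul, abs_mul, abs_of_nonneg (hVp ω), abs_of_nonneg (hK_nonneg _)]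
      _ ≤ V ω * (Ec * (T2 + |X ω - X' ω|)) + |V ω - V' ω| * A₂ :=
          add_le_add (mul_le_mul_of_nonneg_left (hKd ω) (hVp ω))
            (mul_le_mul_of_nonneg_left (hK_bdd _) (abs_nonneg _))
      _ = Ec * T2 * V ω + Ec * (V ω * |X ω - X' ω|) + A₂ * |V ω - V' ω| := by ring
    rw [h1]
    have h2 : |∫ ω, (g ω - g' ω) ∂μ| ≤ ∫ ω, |g ω - g' ω| ∂μ := by
      simpa [Real.norm_eq_abs] using
        norm_integral_le_integral_norm (μ := μ) (fun ω => g ω - g' ω)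
    refine h2.trans ?_
    have h3 : ∫ ω, |g ω - g' ω| ∂μ ≤
        ∫ ω, (Ec * T2 * V ω + Ec * (V ω * |X ω - X' ω|) + A₂ * |V ω - V' ω|) ∂μ :=
      integral_mono (hgi.sub hg'i).abs
        (((hVi.const_mul _).add (hVXi.const_mul _)).add (hVV'i.const_mul _)) hptw
    refine h3.trans ?_
    have i1 : Integrable (fun ω => Ec * T2 * V ω) μ := hVi.const_mul _
    have i2 : Integrable (fun ω => Ec * (V ω * |X ω - X' ω|)) μ := hVXi.const_mul _
    have i3 : Integrable (fun ω => A₂ * |V ω - V' ω|) μ := hVV'i.const_mul _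
    have i12 : Integrable (fun ω => Ec * T2 * V ω + Ec * (V ω * |X ω - X' ω|)) μ := i1.add i2
    rw [integral_add i12 i3, integral_add i1 i2,
      integral_const_mul, integral_const_mul, integral_const_mul]
    have e1 : Ec * T2 * (∫ ω, V ω ∂μ) ≤ Ec * T2 * M :=
      mul_le_mul_of_nonneg_left hVint (by positivity)
    have e2 : Ec * (∫ ω, V ω * |X ω - X' ω| ∂μ) ≤ Ec * (M * T3) :=
      mul_le_mul_of_nonneg_left hVXint hEc.le
    have e3 : A₂ * (∫ ω, |V ω - V' ω| ∂μ) ≤ A₂ * T4 :=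
      mul_le_mul_of_nonneg_left hVV'int hA₂.le
    have e4 : Ec * T2 * M + Ec * (M * T3) + A₂ * T4 = Ec * M * (T2 + T3) + A₂ * T4 := by ring
    linarith
  -- ratio values and bounds
  have hDpos : 0 < Dn + δ := by linarith
  have hD'pos : 0 < Dn' + δ := by linarith
  set Fv := (N + δ) / (Dn + δ) with hFvdef
  set F'v := (N' + δ) / (Dn' + δ) with hF'vdef
  have hF : Fratio ε δ K (Measure.map (fun ω => (X ω, V ω)) μ) x = Fv :=
    Fratio_map μ hKc hX hV ε δ x
  have hF' : Fratio ε δ K (Measure.map (fun ω => (X' ω, V' ω)) μ) x' = F'v :=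
    Fratio_map μ hKc hX' hV' ε δ x'
  have hFle : Fv ≤ (A₂ + δ) / δ := by
    rw [hFvdef]; exact div_le_div₀ (by positivity) (by linarith) hδ (by linarith)
  have hF'le : F'v ≤ (A₂ + δ) / δ := by
    rw [hF'vdef]; exact div_le_div₀ (by positivity) (by linarith) hδ (by linarith)
  have hFge : δ / (A₂ * M + δ) ≤ Fv := by
    rw [hFvdef]; exact div_le_div₀ (by positivity) (by linarith) hDpos (by linarith)
  have hF'ge : δ / (A₂ * M + δ) ≤ F'v := by
    rw [hF'vdef]; exact div_le_div₀ (by positivity) (by linarith) hD'pos (by linarith)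
  have hsF : Real.sqrt Fv ≤ S := by rw [hSdef]; exact Real.sqrt_le_sqrt hFle
  have hsF' : Real.sqrt F'v ≤ S := by rw [hSdef]; exact Real.sqrt_le_sqrt hF'le
  clear_value Fv F'v
  -- ΔF
  have hdF : |Fv - F'v| ≤ |N - N'| / δ + (A₂ + δ) * |Dn - Dn'| / δ ^ 2 := by
    have hid : Fv - F'v =
        (N - N') / (Dn + δ) + (N' + δ) * (Dn' - Dn) / ((Dn + δ) * (Dn' + δ)) := by
      rw [hFvdef, hF'vdef]
      field_simp
      ring
    rw [hid]
    refine (abs_add_le _ _).trans (add_le_add ?_ ?_)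
    · rw [abs_div, abs_of_pos hDpos]
      exact div_le_div₀ (abs_nonneg _) le_rfl hδ (by linarith)
    · rw [abs_div, abs_mul, abs_of_pos (by linarith : (0:ℝ) < N' + δ),
        abs_of_pos (by positivity : (0:ℝ) < (Dn + δ) * (Dn' + δ))]
      refine div_le_div₀ (by positivity) ?_ (by positivity) ?_
      · rw [abs_sub_comm]
        exact mul_le_mul_of_nonneg_right (by linarith) (abs_nonneg _)
      · rw [sq]
        exact mul_le_mul (by linarith) (by linarith) hδ.le (by linarith)
  -- sqrt F difference
  have hcpos : (0:ℝ) < δ / (A₂ * M + δ) := by positivity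
  have hsd : |Real.sqrt Fv - Real.sqrt F'v| ≤ R * |Fv - F'v| := by
    have h1 := sqrt_lip hcpos hFge hF'ge
    rw [div_eq_mul_inv, ← Real.sqrt_inv, inv_div] at h1
    rw [hRdef]
    linarith [h1]
  -- σ̃ difference
  have hsig : |D t x * Real.sqrt Fv - D t' x' * Real.sqrt F'v| ≤
      L_Dup * S * (T1 + T2) + (A₁ * R) * |Fv - F'v| := by
    have e : D t x * Real.sqrt Fv - D t' x' * Real.sqrt F'v =
        (D t x - D t' x') * Real.sqrt Fv + D t' x' * (Real.sqrt Fv - Real.sqrt F'v) := by ring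
    rw [e]
    calc |(D t x - D t' x') * Real.sqrt Fv + D t' x' * (Real.sqrt Fv - Real.sqrt F'v)|
        ≤ |(D t x - D t' x') * Real.sqrt Fv| + |D t' x' * (Real.sqrt Fv - Real.sqrt F'v)| :=
          abs_add_le _ _
    _ = |D t x - D t' x'| * Real.sqrt Fv + |D t' x'| * |Real.sqrt Fv - Real.sqrt F'v| := by
        rw [abs_mul, abs_mul, abs_of_nonneg (Real.sqrt_nonneg _)]
    _ ≤ (L_Dup * (T1 + T2)) * S + A₁ * (R * |Fv - F'v|) :=
        add_le_add
          (mul_le_mul hDd hsF (Real.sqrt_nonneg _) (by positivity))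
          (mul_le_mul (hD_bdd _ _) hsd (abs_nonneg _) hA₁.le)
    _ = L_Dup * S * (T1 + T2) + (A₁ * R) * |Fv - F'v| := by ring
  -- assemble C bound
  have hchain : |D t x * Real.sqrt Fv - D t' x' * Real.sqrt F'v| ≤
      C * (T1 + T2 + T3 + T4) := by
    have h1 : |Fv - F'v| ≤
        Ec * (T2 + T3) / δ + (A₂ + δ) * (Ec * M * (T2 + T3) + A₂ * T4) / δ ^ 2 := by
      refine hdF.trans (add_le_add ?_ ?_)
      · gcongr
      · gcongr <;> linarith
    refine hsig.trans ?_
    have h2 : (A₁ * R) * |Fv - F'v| ≤ c2 * (T2 + T3) + c4 * T4 := by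
      have h5 := mul_le_mul_of_nonneg_left h1 (by positivity : (0:ℝ) ≤ A₁ * R)
      refine h5.trans (le_of_eq ?_)
      rw [hc2def, hc4def]
      ring
    have hLS : 0 ≤ L_Dup * S := by positivity
    have key : C * (T1 + T2 + T3 + T4) -
        (L_Dup * S * (T1 + T2) + (c2 * (T2 + T3) + c4 * T4)) =
        (c2 + c4) * T1 + c4 * T2 + (L_Dup * S + c4) * T3 + (L_Dup * S + c2) * T4 := by
      rw [hCdef]; ring
    have p1 : 0 ≤ (c2 + c4) * T1 := mul_nonneg (by positivity) hT1n
    have p2 : 0 ≤ c4 * T2 := mul_nonneg hc4.le hT2n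
    have p3 : 0 ≤ (L_Dup * S + c4) * T3 := mul_nonneg (by positivity) hT3n
    have p4 : 0 ≤ (L_Dup * S + c2) * T4 := mul_nonneg (by positivity) hT4n
    linarith
  -- final assembly
  simp only [sigmaT]
  rw [hF, hF']
  have hsvd : |Real.sqrt v - Real.sqrt v'| ≤ Real.sqrt |v - v'| := abs_sqrt_sub_sqrt hv hv'
  have hbd' : |D t' x' * Real.sqrt F'v| ≤ A₁ * S := by
    rw [abs_mul, abs_of_nonneg (Real.sqrt_nonneg _)]
    exact mul_le_mul (hD_bdd _ _) hsF' (Real.sqrt_nonneg _) hA₁.le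
  have e : Real.sqrt v * (D t x * Real.sqrt Fv) - Real.sqrt v' * (D t' x' * Real.sqrt F'v) =
      (Real.sqrt v - Real.sqrt v') * (D t' x' * Real.sqrt F'v) +
        Real.sqrt v * (D t x * Real.sqrt Fv - D t' x' * Real.sqrt F'v) := by ring
  rw [hSdef] at hbd' ⊢
  rw [e]
  calc |(Real.sqrt v - Real.sqrt v') * (D t' x' * Real.sqrt F'v) +
        Real.sqrt v * (D t x * Real.sqrt Fv - D t' x' * Real.sqrt F'v)|
      ≤ |Real.sqrt v - Real.sqrt v'| * |D t' x' * Real.sqrt F'v| +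
        Real.sqrt v * |D t x * Real.sqrt Fv - D t' x' * Real.sqrt F'v| := by
        refine (abs_add_le _ _).trans (le_of_eq ?_)
        rw [abs_mul (Real.sqrt v - Real.sqrt v'), abs_mul (Real.sqrt v),
          abs_of_nonneg (Real.sqrt_nonneg v)]
  _ ≤ Real.sqrt |v - v'| * (A₁ * Real.sqrt ((A₂ + δ) / δ)) +
        Real.sqrt v * (C * (T1 + T2 + T3 + T4)) :=
      add_le_add (mul_le_mul hsvd hbd' (abs_nonneg _) (Real.sqrt_nonneg _))
        (mul_le_mul_of_nonneg_left hchain (Real.sqrt_nonneg v))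
  _ = (A₁ * Real.sqrt ((A₂ + δ) / δ)) * Real.sqrt |v - v'| +
        Real.sqrt v * (C * (T1 + T2 + T3 + T4)) := by ring
end

section
/- Master estimate for the drift coefficient: for every M > 0 there exists a constant C > 0, depending only on ε, δ, A₁, A₂, L_K, L_Dup and M, such that whenever ‖V‖₂ ≤ M and ‖V'‖₂ ≤ M, for all t, t', x, x' ∈ ℝ and all v, v' ≥ 0: |β(t,(x,v),law(X,V)) − β(t',(x',v'),law(X',V'))| ≤ β̃_max·|v − v'| + v·C·(|t−t'|^{1/2} + |x−x'| + ‖X−X'‖₂ + ‖V−V'‖₂). -/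
open MeasureTheory

/-- `β̃(t,x,ν) = −(1/2)·D(t,x)²·F(x,ν)`. -/
noncomputable def betaT (ε δ : ℝ) (K : ℝ → ℝ) (D : ℝ → ℝ → ℝ)
    (t x : ℝ) (ν : Measure (ℝ × ℝ)) : ℝ :=
  -(1 / 2) * (D t x) ^ 2 * Fratio ε δ K ν x

/-- Cauchy–Schwarz for the integral of a product, in terms of `l2norm`. -/
lemma aux_cs {Ω : Type*} [MeasurableSpace Ω] {μ : Measure Ω} {f g : Ω → ℝ}
    (hf : MemLp f 2 μ) (hg : MemLp g 2 μ) :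
    ∫ ω, |f ω| * |g ω| ∂μ ≤ l2norm μ f * l2norm μ g := by
  have h2 : Real.HolderConjugate 2 2 := Real.HolderConjugate.two_two
  have hf' : MemLp f (ENNReal.ofReal 2) μ := by
    rwa [show ENNReal.ofReal 2 = 2 by simp]
  have hg' : MemLp g (ENNReal.ofReal 2) μ := by
    rwa [show ENNReal.ofReal 2 = 2 by simp]
  have h := integral_mul_norm_le_Lp_mul_Lq h2 hf' hg'
  simp only [Real.norm_eq_abs] at h
  have e1 : ∀ (u : ℝ), |u| ^ (2:ℝ) = u ^ 2 := fun u => by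
    rw [show (2:ℝ) = ((2:ℕ):ℝ) by norm_num, Real.rpow_natCast, sq_abs]
  simp only [e1] at h
  rw [l2norm, l2norm, Real.sqrt_eq_rpow, Real.sqrt_eq_rpow]
  exact h

/-- On a probability space the `L¹` norm is dominated by the `L²` norm. -/
lemma aux_l1 {Ω : Type*} [MeasurableSpace Ω] {μ : Measure Ω} [IsProbabilityMeasure μ]
    {f : Ω → ℝ} (hf : MemLp f 2 μ) : ∫ ω, |f ω| ∂μ ≤ l2norm μ f := by
  have hone : MemLp (fun _ : Ω => (1:ℝ)) 2 μ := memLp_const 1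
  have h := aux_cs hf hone
  simp only [abs_one, mul_one] at h
  have h1 : l2norm μ (fun _ : Ω => (1:ℝ)) = 1 := by simp [l2norm]
  rwa [h1, mul_one] at h

/-- The product of two `L²` functions is integrable. -/
lemma aux_int_mul {Ω : Type*} [MeasurableSpace Ω] {μ : Measure Ω} {f g : Ω → ℝ}
    (hf : MemLp f 2 μ) (hg : MemLp g 2 μ) : Integrable (fun ω => f ω * g ω) μ := by
  have h := hg.smul (φ := f) hf (r := 1)
  have h' : (f • g) = fun ω => f ω * g ω := rfl
  rw [h'] at h
  exact memLp_one_iff_integrable.mp h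

set_option maxHeartbeats 2000000 in
/-- master estimate for the drift coefficient
`β(t,(x,v),ν) = v·β̃(t,x,ν)`, with `β̃_max = A₁²·(A₂+δ)/(2δ)` and a constant `C`
depending only on `ε, δ, A₁, A₂, L_K, L_Dup` and the moment bound `M`. -/
theorem stmt_12 (ε δ A₁ A₂ L_K L_Dup : ℝ) (hε : 0 < ε) (hδ : 0 < δ)
    (hA₁ : 0 < A₁) (hA₂ : 0 < A₂) (hLK : 0 < L_K) (hLDup : 0 < L_Dup)
    (K : ℝ → ℝ) (hK_nonneg : ∀ u, 0 ≤ K u) (hK_bdd : ∀ u, K u ≤ A₂)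
    (hK_lip : ∀ u u', |K u - K u'| ≤ L_K * |u - u'|)
    (D : ℝ → ℝ → ℝ) (hD_bdd : ∀ t x, |D t x| ≤ A₁)
    (hD_lip : ∀ t₁ x₁ t₂ x₂,
      |D t₁ x₁ - D t₂ x₂| ≤ L_Dup * (|t₁ - t₂| ^ ((1 : ℝ) / 2) + |x₁ - x₂|)) :
    ∀ M : ℝ, 0 < M → ∃ C : ℝ, 0 < C ∧
      ∀ (Ω : Type) (_ : MeasurableSpace Ω) (μ : Measure Ω), IsProbabilityMeasure μ →
        ∀ (X V X' V' : Ω → ℝ),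
          Measurable X → Measurable V → Measurable X' → Measurable V' →
          (∀ ω, 0 ≤ V ω) → (∀ ω, 0 ≤ V' ω) →
          MemLp X 2 μ → MemLp V 2 μ → MemLp X' 2 μ → MemLp V' 2 μ →
          l2norm μ V ≤ M → l2norm μ V' ≤ M →
          ∀ (t t' x x' v v' : ℝ), 0 ≤ v → 0 ≤ v' →
            |v * betaT ε δ K D t x (Measure.map (fun ω => (X ω, V ω)) μ) -
              v' * betaT ε δ K D t' x' (Measure.map (fun ω => (X' ω, V' ω)) μ)| ≤
              (A₁ ^ 2 * (A₂ + δ) / (2 * δ)) * |v - v'| +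
                v * (C * (|t - t'| ^ ((1 : ℝ) / 2) + |x - x'| +
                  l2norm μ (fun ω => X ω - X' ω) + l2norm μ (fun ω => V ω - V' ω))) := by
  -- K is Lipschitz, hence measurable
  have hKm : Measurable K := by
    have hL : LipschitzWith L_K.toNNReal K := by
      refine LipschitzWith.of_dist_le_mul fun u u' => ?_
      rw [Real.dist_eq, Real.dist_eq, Real.coe_toNNReal L_K hLK.le]
      exact hK_lip u u'
    exact hL.continuous.measurable
  intro M hM
  set C₂ : ℝ := L_K / (ε * δ) + (A₂ + δ) * (A₂ + L_K / ε * M) / δ ^ 2 with hC₂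
  set C : ℝ := A₁ * L_Dup * (A₂ + δ) / δ + A₁ ^ 2 / 2 * C₂ with hC
  have hC₂pos : 0 < C₂ := by rw [hC₂]; positivity
  have hCpos : 0 < C := by rw [hC]; positivity
  refine ⟨C, hCpos, ?_⟩
  intro Ω mΩ μ hμ X V X' V' hX hV hX' hV' hVpos hV'pos hX2 hV2 hX'2 hV'2 hVM hV'M
    t t' x x' v v' hv hv'
  -- basic integrabilities
  have hXi : Integrable X μ := hX2.integrable one_le_two
  have hVi : Integrable V μ := hV2.integrable one_le_two
  have hX'i : Integrable X' μ := hX'2.integrable one_le_two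
  have hV'i : Integrable V' μ := hV'2.integrable one_le_two
  have hXX'2 : MemLp (fun ω => X ω - X' ω) 2 μ := hX2.sub hX'2
  have hVV'2 : MemLp (fun ω => V ω - V' ω) 2 μ := hV2.sub hV'2
  -- representation of the two integrals appearing in `Fratio` over the pushforward measure
  have rep1 : ∀ (Y W : Ω → ℝ), Measurable Y → Measurable W → ∀ z : ℝ,
      (∫ p, K ((p.1 - z) / ε) ∂(Measure.map (fun ω => (Y ω, W ω)) μ))
        = ∫ ω, K ((Y ω - z) / ε) ∂μ := by
    intro Y W hY hW z
    have hm : AEStronglyMeasurable (fun p : ℝ × ℝ => K ((p.1 - z) / ε))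
        (Measure.map (fun ω => (Y ω, W ω)) μ) :=
      Measurable.aestronglyMeasurable
        (by exact hKm.comp ((measurable_fst.sub_const z).div_const ε))
    rw [integral_map (hY.prodMk hW).aemeasurable hm]
  have rep2 : ∀ (Y W : Ω → ℝ), Measurable Y → Measurable W → ∀ z : ℝ,
      (∫ p, p.2 * K ((p.1 - z) / ε) ∂(Measure.map (fun ω => (Y ω, W ω)) μ))
        = ∫ ω, W ω * K ((Y ω - z) / ε) ∂μ := by
    intro Y W hY hW z
    have hm : AEStronglyMeasurable (fun p : ℝ × ℝ => p.2 * K ((p.1 - z) / ε))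
        (Measure.map (fun ω => (Y ω, W ω)) μ) :=
      Measurable.aestronglyMeasurable
        (by exact measurable_snd.mul (hKm.comp ((measurable_fst.sub_const z).div_const ε)))
    rw [integral_map (hY.prodMk hW).aemeasurable hm]
  -- integrability of the kernels
  have intK : ∀ (Y : Ω → ℝ), Measurable Y → ∀ z : ℝ,
      Integrable (fun ω => K ((Y ω - z) / ε)) μ := by
    intro Y hY z
    refine (integrable_const A₂).mono'
      ((hKm.comp ((hY.sub_const z).div_const ε)).aestronglyMeasurable) ?_
    filter_upwards with ω
    rw [Real.norm_eq_abs, abs_of_nonneg (hK_nonneg _)]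
    exact hK_bdd _
  have intWK : ∀ (Y W : Ω → ℝ), Measurable Y → Measurable W → Integrable W μ → ∀ z : ℝ,
      Integrable (fun ω => W ω * K ((Y ω - z) / ε)) μ := by
    intro Y W hY hW hWint z
    refine (hWint.abs.const_mul A₂).mono'
      (hW.aestronglyMeasurable.mul
        ((hKm.comp ((hY.sub_const z).div_const ε)).aestronglyMeasurable)) ?_
    filter_upwards with ω
    rw [Real.norm_eq_abs, abs_mul]
    calc |W ω| * |K ((Y ω - z) / ε)| ≤ |W ω| * A₂ := by
          gcongr
          rw [abs_of_nonneg (hK_nonneg _)]; exact hK_bdd _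
      _ = A₂ * |W ω| := mul_comm _ _
  -- the main quantities
  set N : ℝ := ∫ ω, K ((X ω - x) / ε) ∂μ with hN
  set N' : ℝ := ∫ ω, K ((X' ω - x') / ε) ∂μ with hN'
  set Dq : ℝ := ∫ ω, V ω * K ((X ω - x) / ε) ∂μ with hDq
  set Dq' : ℝ := ∫ ω, V' ω * K ((X' ω - x') / ε) ∂μ with hDq'
  have hβrepr : betaT ε δ K D t x (Measure.map (fun ω => (X ω, V ω)) μ)
      = -(1/2) * D t x ^ 2 * ((N + δ) / (Dq + δ)) := by
    simp only [betaT, Fratio, rep1 X V hX hV x, rep2 X V hX hV x, hN, hDq]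
  have hβrepr' : betaT ε δ K D t' x' (Measure.map (fun ω => (X' ω, V' ω)) μ)
      = -(1/2) * D t' x' ^ 2 * ((N' + δ) / (Dq' + δ)) := by
    simp only [betaT, Fratio, rep1 X' V' hX' hV' x', rep2 X' V' hX' hV' x', hN', hDq']
  -- bounds on the integrals
  have hN0 : 0 ≤ N := integral_nonneg fun ω => hK_nonneg _
  have hN'0 : 0 ≤ N' := integral_nonneg fun ω => hK_nonneg _
  have hNA : N ≤ A₂ := by
    have h := integral_mono (intK X hX x) (integrable_const A₂) (fun ω => hK_bdd _)
    simpa [measure_univ] using h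
  have hN'A : N' ≤ A₂ := by
    have h := integral_mono (intK X' hX' x') (integrable_const A₂) (fun ω => hK_bdd _)
    simpa [measure_univ] using h
  have hD0 : 0 ≤ Dq := integral_nonneg fun ω => mul_nonneg (hVpos ω) (hK_nonneg _)
  have hD'0 : 0 ≤ Dq' := integral_nonneg fun ω => mul_nonneg (hV'pos ω) (hK_nonneg _)
  have hden : (0:ℝ) < Dq + δ := by linarith
  have hden' : (0:ℝ) < Dq' + δ := by linarith
  set F : ℝ := (N + δ) / (Dq + δ) with hF
  set F' : ℝ := (N' + δ) / (Dq' + δ) with hF'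
  have hF0 : 0 ≤ F := div_nonneg (by linarith) hden.le
  have hF'0 : 0 ≤ F' := div_nonneg (by linarith) hden'.le
  have hFb : F ≤ (A₂ + δ) / δ := div_le_div₀ (by positivity) (by linarith) hδ (by linarith)
  have hF'b : F' ≤ (A₂ + δ) / δ := div_le_div₀ (by positivity) (by linarith) hδ (by linarith)
  -- l2 abbreviations
  set eX : ℝ := l2norm μ (fun ω => X ω - X' ω) with heX
  set eV : ℝ := l2norm μ (fun ω => V ω - V' ω) with heV
  have heX0 : 0 ≤ eX := Real.sqrt_nonneg _
  have heV0 : 0 ≤ eV := Real.sqrt_nonneg _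
  have hT0 : 0 ≤ |t - t'| ^ ((1:ℝ)/2) := Real.rpow_nonneg (abs_nonneg _) _
  set S : ℝ := |t - t'| ^ ((1:ℝ)/2) + |x - x'| + eX + eV with hS
  have hS0 : 0 ≤ S := by rw [hS]; positivity
  clear_value S F F' N N' Dq Dq' eX eV
  -- L¹-type bounds
  have hI1 : ∫ ω, |X ω - X' ω| ∂μ ≤ eX := by rw [heX]; exact aux_l1 hXX'2
  have hI2 : ∫ ω, |V ω - V' ω| ∂μ ≤ eV := by rw [heV]; exact aux_l1 hVV'2
  have hJ : ∫ ω, |V' ω * (X ω - X' ω)| ∂μ ≤ M * eX := by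
    have h := aux_cs hV'2 hXX'2
    calc ∫ ω, |V' ω * (X ω - X' ω)| ∂μ = ∫ ω, |V' ω| * |X ω - X' ω| ∂μ := by
          simp only [abs_mul]
      _ ≤ l2norm μ V' * eX := by rw [heX]; exact h
      _ ≤ M * eX := by gcongr
  have hIV' : ∫ ω, V' ω ∂μ ≤ M := by
    have h := aux_l1 hV'2
    have h2 : ∫ ω, |V' ω| ∂μ = ∫ ω, V' ω ∂μ := by
      congr 1; funext ω; exact abs_of_nonneg (hV'pos ω)
    rw [h2] at h
    exact h.trans hV'M
  -- pointwise Lipschitz control of the kernel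
  have hKle : ∀ a b : ℝ, |K (a / ε) - K (b / ε)| ≤ L_K / ε * |a - b| := by
    intro a b
    calc |K (a / ε) - K (b / ε)| ≤ L_K * |a / ε - b / ε| := hK_lip _ _
      _ = L_K / ε * |a - b| := by
          rw [div_sub_div_same, abs_div, abs_of_pos hε]; ring
  have hptw : ∀ ω, |K ((X ω - x) / ε) - K ((X' ω - x') / ε)|
      ≤ L_K / ε * |X ω - X' ω| + L_K / ε * |x - x'| := by
    intro ω
    calc |K ((X ω - x) / ε) - K ((X' ω - x') / ε)|
        ≤ L_K / ε * |(X ω - x) - (X' ω - x')| := hKle _ _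
      _ = L_K / ε * |(X ω - X' ω) - (x - x')| := by ring_nf
      _ ≤ L_K / ε * (|X ω - X' ω| + |x - x'|) :=
          mul_le_mul_of_nonneg_left (abs_sub _ _) (by positivity)
      _ = L_K / ε * |X ω - X' ω| + L_K / ε * |x - x'| := by ring
  -- bound on |N - N'|
  have hNdiff : |N - N'| ≤ L_K / ε * (eX + |x - x'|) := by
    have hint1 := intK X hX x
    have hint2 := intK X' hX' x'
    have ha : Integrable (fun ω => L_K / ε * |X ω - X' ω|) μ := by
      exact (hXi.sub hX'i).abs.const_mul _
    have hintg : Integrable (fun ω => L_K / ε * |X ω - X' ω| + L_K / ε * |x - x'|) μ := by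
      exact ha.add (integrable_const _)
    calc |N - N'| = |∫ ω, (K ((X ω - x) / ε) - K ((X' ω - x') / ε)) ∂μ| := by
          rw [hN, hN', integral_sub hint1 hint2]
      _ ≤ ∫ ω, |K ((X ω - x) / ε) - K ((X' ω - x') / ε)| ∂μ := by
          simpa only [Real.norm_eq_abs] using
            norm_integral_le_integral_norm (fun ω => K ((X ω - x) / ε) - K ((X' ω - x') / ε))
      _ ≤ ∫ ω, (L_K / ε * |X ω - X' ω| + L_K / ε * |x - x'|) ∂μ :=
          integral_mono (hint1.sub hint2).abs hintg hptw
      _ = L_K / ε * (∫ ω, |X ω - X' ω| ∂μ) + L_K / ε * |x - x'| := by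
          rw [integral_add ha (integrable_const _), integral_const_mul, integral_const]
          simp [measure_univ]
      _ ≤ L_K / ε * (eX + |x - x'|) := by
          rw [mul_add]; gcongr
  -- bound on |Dq - Dq'|
  have hDptw : ∀ ω, |V ω * K ((X ω - x) / ε) - V' ω * K ((X' ω - x') / ε)|
      ≤ A₂ * |V ω - V' ω| + L_K / ε * |V' ω * (X ω - X' ω)| + (L_K / ε * |x - x'|) * V' ω := by
    intro ω
    set k := K ((X ω - x) / ε)
    set k' := K ((X' ω - x') / ε)
    have hk0 : 0 ≤ k := hK_nonneg _
    have hkA : k ≤ A₂ := hK_bdd _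
    have hkk' : |k - k'| ≤ L_K / ε * |X ω - X' ω| + L_K / ε * |x - x'| := hptw ω
    have e1 : V ω * k - V' ω * k' = (V ω - V' ω) * k + V' ω * (k - k') := by ring
    calc |V ω * k - V' ω * k'| = |(V ω - V' ω) * k + V' ω * (k - k')| := by rw [e1]
      _ ≤ |(V ω - V' ω) * k| + |V' ω * (k - k')| := abs_add_le _ _
      _ = |V ω - V' ω| * k + V' ω * |k - k'| := by
          rw [abs_mul, abs_mul, abs_of_nonneg hk0, abs_of_nonneg (hV'pos ω)]
      _ ≤ |V ω - V' ω| * A₂ + V' ω * (L_K / ε * |X ω - X' ω| + L_K / ε * |x - x'|) := by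
          gcongr
          exact hV'pos ω
      _ = A₂ * |V ω - V' ω| + L_K / ε * (V' ω * |X ω - X' ω|) + (L_K / ε * |x - x'|) * V' ω := by
          ring
      _ = A₂ * |V ω - V' ω| + L_K / ε * |V' ω * (X ω - X' ω)| + (L_K / ε * |x - x'|) * V' ω := by
          rw [abs_mul, abs_of_nonneg (hV'pos ω)]
  have hDdiff : |Dq - Dq'| ≤ A₂ * eV + L_K / ε * (M * eX) + (L_K / ε * |x - x'|) * M := by
    have hint1 := intWK X V hX hV hVi x
    have hint2 := intWK X' V' hX' hV' hV'i x'
    have hintVX : Integrable (fun ω => |V' ω * (X ω - X' ω)|) μ := by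
      exact (aux_int_mul hV'2 hXX'2).abs
    have hb1 : Integrable (fun ω => A₂ * |V ω - V' ω|) μ := by
      exact (hVi.sub hV'i).abs.const_mul _
    have hb2 : Integrable (fun ω => L_K / ε * |V' ω * (X ω - X' ω)|) μ := by
      exact hintVX.const_mul _
    have hb3 : Integrable (fun ω => (L_K / ε * |x - x'|) * V' ω) μ := by
      exact hV'i.const_mul _
    have hb12 : Integrable (fun ω => A₂ * |V ω - V' ω|
        + L_K / ε * |V' ω * (X ω - X' ω)|) μ := by exact hb1.add hb2
    have hintg : Integrable (fun ω => A₂ * |V ω - V' ω| + L_K / ε * |V' ω * (X ω - X' ω)|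
        + (L_K / ε * |x - x'|) * V' ω) μ := by exact hb12.add hb3
    calc |Dq - Dq'|
        = |∫ ω, (V ω * K ((X ω - x) / ε) - V' ω * K ((X' ω - x') / ε)) ∂μ| := by
          rw [hDq, hDq', integral_sub hint1 hint2]
      _ ≤ ∫ ω, |V ω * K ((X ω - x) / ε) - V' ω * K ((X' ω - x') / ε)| ∂μ := by
          simpa only [Real.norm_eq_abs] using
            norm_integral_le_integral_norm
              (fun ω => V ω * K ((X ω - x) / ε) - V' ω * K ((X' ω - x') / ε))
      _ ≤ ∫ ω, (A₂ * |V ω - V' ω| + L_K / ε * |V' ω * (X ω - X' ω)|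
            + (L_K / ε * |x - x'|) * V' ω) ∂μ :=
          integral_mono (hint1.sub hint2).abs hintg hDptw
      _ = A₂ * (∫ ω, |V ω - V' ω| ∂μ) + L_K / ε * (∫ ω, |V' ω * (X ω - X' ω)| ∂μ)
            + (L_K / ε * |x - x'|) * (∫ ω, V' ω ∂μ) := by
          rw [integral_add hb12 hb3, integral_add hb1 hb2,
            integral_const_mul, integral_const_mul, integral_const_mul]
      _ ≤ A₂ * eV + L_K / ε * (M * eX) + (L_K / ε * |x - x'|) * M := by
          gcongr
  -- bounds in terms of S
  have hxx0 : 0 ≤ |x - x'| := abs_nonneg _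
  have hNS : |N - N'| ≤ L_K / ε * S := by
    refine hNdiff.trans (mul_le_mul_of_nonneg_left ?_ (by positivity))
    rw [hS]; linarith
  have hDS : |Dq - Dq'| ≤ (A₂ + L_K / ε * M) * S := by
    refine hDdiff.trans ?_
    have h1 : eV ≤ S := by rw [hS]; linarith
    have h2 : eX + |x - x'| ≤ S := by rw [hS]; linarith
    calc A₂ * eV + L_K / ε * (M * eX) + (L_K / ε * |x - x'|) * M
        = A₂ * eV + (L_K / ε * M) * (eX + |x - x'|) := by ring
      _ ≤ A₂ * S + (L_K / ε * M) * S := by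
          gcongr <;> positivity
      _ = (A₂ + L_K / ε * M) * S := by ring
  -- bound on |F - F'|
  have hFdiff : |F - F'| ≤ C₂ * S := by
    have hkey : F - F' = (N - N') / (Dq + δ)
        + (N' + δ) * (Dq' - Dq) / ((Dq + δ) * (Dq' + δ)) := by
      rw [hF, hF']
      field_simp
      ring
    have habs : |F - F'| ≤ |N - N'| / (Dq + δ)
        + (N' + δ) * |Dq - Dq'| / ((Dq + δ) * (Dq' + δ)) := by
      rw [hkey]
      refine (abs_add_le _ _).trans ?_
      rw [abs_div, abs_div, abs_mul, abs_of_pos hden, abs_of_pos (mul_pos hden hden'),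
        abs_of_pos (by linarith : (0:ℝ) < N' + δ), abs_sub_comm Dq' Dq]
    have hstep : |N - N'| / (Dq + δ) + (N' + δ) * |Dq - Dq'| / ((Dq + δ) * (Dq' + δ))
        ≤ (L_K / ε * S) / δ + (A₂ + δ) * ((A₂ + L_K / ε * M) * S) / (δ * δ) := by
      have t1 : |N - N'| / (Dq + δ) ≤ (L_K / ε * S) / δ :=
        div_le_div₀ (by positivity) hNS hδ (by linarith)
      have t2 : (N' + δ) * |Dq - Dq'| / ((Dq + δ) * (Dq' + δ))
          ≤ (A₂ + δ) * ((A₂ + L_K / ε * M) * S) / (δ * δ) := by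
        refine div_le_div₀ (by positivity) ?_ (by positivity)
          (mul_le_mul (by linarith) (by linarith) hδ.le (by linarith))
        exact mul_le_mul (by linarith) hDS (abs_nonneg _) (by positivity)
      exact add_le_add t1 t2
    refine habs.trans (hstep.trans (le_of_eq ?_))
    rw [hC₂]
    field_simp
  -- bound on the squared-diffusion difference
  have hDD : |D t x ^ 2 - D t' x' ^ 2|
      ≤ 2 * A₁ * L_Dup * (|t - t'| ^ ((1:ℝ)/2) + |x - x'|) := by
    have e1 : D t x ^ 2 - D t' x' ^ 2 = (D t x - D t' x') * (D t x + D t' x') := by ring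
    rw [e1, abs_mul]
    have h1 := hD_lip t x t' x'
    have h2 : |D t x + D t' x'| ≤ 2 * A₁ :=
      (abs_add_le _ _).trans (by linarith [hD_bdd t x, hD_bdd t' x'])
    calc |D t x - D t' x'| * |D t x + D t' x'|
        ≤ (L_Dup * (|t - t'| ^ ((1:ℝ)/2) + |x - x'|)) * (2 * A₁) :=
          mul_le_mul h1 h2 (abs_nonneg _) (by positivity)
      _ = 2 * A₁ * L_Dup * (|t - t'| ^ ((1:ℝ)/2) + |x - x'|) := by ring
  have hDA : D t x ^ 2 ≤ A₁ ^ 2 := by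
    rw [← sq_abs]
    exact pow_le_pow_left₀ (abs_nonneg _) (hD_bdd t x) 2
  have hD'A : D t' x' ^ 2 ≤ A₁ ^ 2 := by
    rw [← sq_abs]
    exact pow_le_pow_left₀ (abs_nonneg _) (hD_bdd t' x') 2
  -- bound on betaT itself
  have hβmax : |(-(1/2) : ℝ) * D t' x' ^ 2 * F'| ≤ A₁ ^ 2 * (A₂ + δ) / (2 * δ) := by
    rw [abs_mul, abs_mul, abs_of_nonneg (sq_nonneg (D t' x')), abs_of_nonneg hF'0,
      show |(-(1/2) : ℝ)| = 1/2 by norm_num]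
    calc (1/2 : ℝ) * D t' x' ^ 2 * F' ≤ (1/2) * A₁ ^ 2 * ((A₂ + δ) / δ) := by
          apply mul_le_mul _ hF'b hF'0 (by positivity)
          exact mul_le_mul_of_nonneg_left hD'A (by norm_num)
      _ = A₁ ^ 2 * (A₂ + δ) / (2 * δ) := by ring
  -- bound on the difference of betaT
  have hβdiff : |(-(1/2) : ℝ) * D t x ^ 2 * F - (-(1/2)) * D t' x' ^ 2 * F'| ≤ C * S := by
    have e1 : (-(1/2) : ℝ) * D t x ^ 2 * F - (-(1/2)) * D t' x' ^ 2 * F'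
        = (-(1/2)) * ((D t x ^ 2 - D t' x' ^ 2) * F) - (1/2) * (D t' x' ^ 2 * (F - F')) := by
      ring
    have hTx : |t - t'| ^ ((1:ℝ)/2) + |x - x'| ≤ S := by rw [hS]; linarith
    calc |(-(1/2) : ℝ) * D t x ^ 2 * F - (-(1/2)) * D t' x' ^ 2 * F'|
        = |(-(1/2) : ℝ) * ((D t x ^ 2 - D t' x' ^ 2) * F)
            - (1/2) * (D t' x' ^ 2 * (F - F'))| := by rw [e1]
      _ ≤ |(-(1/2) : ℝ) * ((D t x ^ 2 - D t' x' ^ 2) * F)|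
            + |(1/2 : ℝ) * (D t' x' ^ 2 * (F - F'))| := abs_sub _ _
      _ = (1/2) * (|D t x ^ 2 - D t' x' ^ 2| * F)
            + (1/2) * (D t' x' ^ 2 * |F - F'|) := by
          rw [abs_mul, abs_mul, abs_mul, abs_mul, abs_of_nonneg hF0,
            abs_of_nonneg (sq_nonneg (D t' x')),
            show |(-(1/2) : ℝ)| = 1/2 by norm_num, show |(1/2 : ℝ)| = 1/2 by norm_num]
      _ ≤ (1/2) * ((2 * A₁ * L_Dup * S) * ((A₂ + δ) / δ)) + (1/2) * (A₁ ^ 2 * (C₂ * S)) := by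
          refine add_le_add (mul_le_mul_of_nonneg_left ?_ (by norm_num))
            (mul_le_mul_of_nonneg_left ?_ (by norm_num))
          · exact mul_le_mul
              (hDD.trans (mul_le_mul_of_nonneg_left hTx (by positivity)))
              hFb hF0 (by positivity)
          · exact mul_le_mul hD'A hFdiff (abs_nonneg _) (by positivity)
      _ = C * S := by rw [hC]; ring
  -- final assembly
  rw [hβrepr, hβrepr']
  calc |v * (-(1/2) * D t x ^ 2 * F) - v' * (-(1/2) * D t' x' ^ 2 * F')|
      = |(v - v') * (-(1/2) * D t' x' ^ 2 * F')
          + v * ((-(1/2)) * D t x ^ 2 * F - (-(1/2)) * D t' x' ^ 2 * F')| := by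
        congr 1; ring
    _ ≤ |(v - v') * (-(1/2) * D t' x' ^ 2 * F')|
          + |v * ((-(1/2)) * D t x ^ 2 * F - (-(1/2)) * D t' x' ^ 2 * F')| := abs_add_le _ _
    _ = |v - v'| * |(-(1/2) : ℝ) * D t' x' ^ 2 * F'|
          + v * |(-(1/2)) * D t x ^ 2 * F - (-(1/2)) * D t' x' ^ 2 * F'| := by
        rw [abs_mul (v - v'), abs_mul v, abs_of_nonneg hv]
    _ ≤ |v - v'| * (A₁ ^ 2 * (A₂ + δ) / (2 * δ)) + v * (C * S) := by
        gcongr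
    _ = (A₁ ^ 2 * (A₂ + δ) / (2 * δ)) * |v - v'| + v * (C * S) := by ring
end
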